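/- Let G be a finite group, H a subgroup, and N a normal subgroup of G with gcd(|H|,|N|) = 1. If H is Π-supplemented in G, then HN/N is Π-supplemented in G/N. -/

import Mathlib

/-!
Since `HT = G`, `H` acts transitively on `G/T`, so `|G : T|` divides `|H|` and is prime to `|N|`.
As `|N : N ∩ T| = |NT : T|` divides `|G : T|`, this forces `N ≤ T`. Then `TN/N = T/N`
supplements `HN/N` with intersection `(H ∩ T)N/N ≤ IN/N`. Finally the Π-property passes from
`I` to `IN/N`, indeed to the image of `I` under any surjection `f : G → Q`: a chief factor `L/K`
of `Q` pulls back to the chief factor `f⁻¹(L)/f⁻¹(K)` of `G`, and the isomorphism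
`G/f⁻¹(K) ≅ Q/K` carries the intersections and normalizers occurring in the Π-property for `I`
onto those for `f(I)`.
-/

open scoped Pointwise

/-- `(K, L)` is a chief factor of `G`: both normal, `K < L`, and no normal
subgroup of `G` lies strictly between them (equivalently `L/K` is a minimal
normal subgroup of `G/K`). -/
def IsChiefFactor (G : Type*) [Group G] (K L : Subgroup G) : Prop :=
  K.Normal ∧ L.Normal ∧ K < L ∧
    ∀ N : Subgroup G, N.Normal → K ≤ N → N ≤ L → N = K ∨ N = L

/-- `H` satisfies the Π-property in `G`: for every chief factor `L/K` of `G`,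
every prime dividing `|G/K : N_{G/K}(HK/K ∩ L/K)|` divides `|HK/K ∩ L/K|`. -/
def PiProperty (G : Type*) [Group G] (H : Subgroup G) : Prop :=
  ∀ (K L : Subgroup G) (hK : K.Normal), IsChiefFactor G K L →
    ∀ p : ℕ, p.Prime →
      p ∣ (Subgroup.normalizer ((Subgroup.map (@QuotientGroup.mk' G _ K hK) H ⊓
            Subgroup.map (@QuotientGroup.mk' G _ K hK) L : Subgroup (G ⧸ K)) : Set (G ⧸ K))).index →
      p ∣ Nat.card ↥(Subgroup.map (@QuotientGroup.mk' G _ K hK) H ⊓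
            Subgroup.map (@QuotientGroup.mk' G _ K hK) L)

/-- `H` is Π-supplemented in `G`. -/
def PiSupplemented (G : Type*) [Group G] (H : Subgroup G) : Prop :=
  ∃ T : Subgroup G, (H : Set G) * (T : Set G) = (Set.univ : Set G) ∧
    ∃ I : Subgroup G, H ⊓ T ≤ I ∧ I ≤ H ∧ PiProperty G I

namespace Subgroup

variable {G : Type*} [Group G]

theorem index_dvd_card_of_mul_eq_univ {H T : Subgroup G}
    (h : (H : Set G) * (T : Set G) = Set.univ) : T.index ∣ Nat.card H := by
  have horbit : MulAction.orbit H ((1 : G) : G ⧸ T) = Set.univ := by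
    refine Set.eq_univ_of_forall fun x => ?_
    induction x using QuotientGroup.induction_on with | H g => ?_
    obtain ⟨a, ha, b, hb, rfl⟩ : g ∈ (H : Set G) * T := h ▸ Set.mem_univ g
    exact ⟨⟨a, ha⟩, QuotientGroup.eq.mpr (by simpa using hb)⟩
  rw [index_eq_card, ← Set.ncard_univ, ← horbit, ← MulAction.index_stabilizer]
  exact index_dvd_card _

theorem relIndex_sup_of_normal (H K : Subgroup G) [K.Normal] [K.FiniteIndex] :
    H.relIndex (H ⊔ K) = H.relIndex K := by
  refine Nat.eq_of_mul_eq_mul_right (Nat.pos_of_ne_zero (FiniteIndex.index_ne_zero (H := K))) ?_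
  calc H.relIndex (H ⊔ K) * K.index
      = K.relIndex (H ⊔ K) * (H.relIndex (H ⊔ K) * (H ⊔ K).index) := by
        rw [← relIndex_mul_index (le_sup_right : K ≤ H ⊔ K)]; ring
    _ = K.relIndex H * H.index := by rw [relIndex_sup_right, relIndex_mul_index le_sup_left]
    _ = (H ⊓ K).index := by simpa [inf_comm] using relIndex_inf_mul_relIndex K H ⊤
    _ = H.relIndex K * K.index := by simpa using (relIndex_inf_mul_relIndex H K ⊤).symm

theorem le_of_coprime_index_natCard {T N : Subgroup G} [N.Normal] [N.FiniteIndex]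
    (h : T.index.Coprime (Nat.card N)) : N ≤ T :=
  relIndex_eq_one.mp <| Nat.eq_one_of_dvd_coprimes h
    (relIndex_sup_of_normal T N ▸ relIndex_dvd_index_of_le le_sup_left)
    (relIndex_dvd_card T N)

theorem map_inf_of_ker_le {G' : Type*} [Group G'] (f : G →* G') (H : Subgroup G)
    {T : Subgroup G} (hT : f.ker ≤ T) : (H ⊓ T).map f = H.map f ⊓ T.map f := by
  refine le_antisymm (map_inf_le H T f) ?_
  rintro _ ⟨⟨a, ha, rfl⟩, b, hb, hba⟩
  have hab : b⁻¹ * a ∈ f.ker := by simp [hba]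
  exact ⟨a, ⟨ha, by simpa using T.mul_mem hb (hT hab)⟩, rfl⟩

end Subgroup

section Surjective

variable {G Q : Type*} [Group G] [Group Q] {f : G →* Q}

theorem IsChiefFactor.comap (hf : Function.Surjective f) {K L : Subgroup Q}
    (h : IsChiefFactor Q K L) : IsChiefFactor G (K.comap f) (L.comap f) := by
  obtain ⟨hK, hL, hKL, hmin⟩ := h
  refine ⟨hK.comap f, hL.comap f, (Subgroup.comap_lt_comap_of_surjective hf).mpr hKL,
    fun M hM hKM hML => ?_⟩
  have hMf : (M.map f).comap f = M :=
    Subgroup.comap_map_eq_self ((Subgroup.ker_le_comap f K).trans hKM)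
  rw [← hMf]
  refine (hmin (M.map f) (hM.map f hf) ?_ (Subgroup.map_le_iff_le_comap.mpr hML)).imp
    (congrArg _) (congrArg _)
  rw [← Subgroup.map_comap_eq_self_of_surjective hf K]
  exact Subgroup.map_mono hKM

noncomputable def quotientComapEquiv (hf : Function.Surjective f) (K : Subgroup Q) [K.Normal] :
    G ⧸ K.comap f ≃* Q ⧸ K :=
  (QuotientGroup.quotientMulEquivOfEq
      (by rw [← MonoidHom.comap_ker, QuotientGroup.ker_mk'])).trans
    (QuotientGroup.quotientKerEquivOfSurjective ((QuotientGroup.mk' K).comp f)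
      ((QuotientGroup.mk'_surjective K).comp hf))

theorem map_quotientComapEquiv_map_mk' (hf : Function.Surjective f) (K : Subgroup Q) [K.Normal]
    (S : Subgroup G) :
    (S.map (QuotientGroup.mk' (K.comap f))).map (quotientComapEquiv hf K).toMonoidHom =
      (S.map f).map (QuotientGroup.mk' K) := by
  rw [Subgroup.map_map, Subgroup.map_map]
  rfl

theorem PiProperty.map (hf : Function.Surjective f) {I : Subgroup G} (hI : PiProperty G I) :
    PiProperty Q (I.map f) := by
  intro K L hK hKL p hp hdvd
  set e := quotientComapEquiv hf K
  have hX : (I.map f).map (QuotientGroup.mk' K) ⊓ L.map (QuotientGroup.mk' K) =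
      (I.map (QuotientGroup.mk' (K.comap f)) ⊓
        (L.comap f).map (QuotientGroup.mk' (K.comap f))).map e.toMonoidHom := by
    rw [Subgroup.map_inf_eq _ _ _ e.injective, map_quotientComapEquiv_map_mk',
      map_quotientComapEquiv_map_mk', Subgroup.map_comap_eq_self_of_surjective hf]
  rw [hX, ← Subgroup.map_equiv_normalizer_eq, Subgroup.index_map_of_bijective e.bijective] at hdvd
  rw [hX, Subgroup.card_map_of_injective e.injective]
  exact hI _ _ (hK.comap f) (hKL.comap hf) p hp hdvd

end Surjective

theorem piSupplemented_quotient_of_coprime {G : Type*} [Group G] [Finite G]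
    (H N : Subgroup G) [N.Normal]
    (hcop : Nat.Coprime (Nat.card H) (Nat.card N)) (h : PiSupplemented G H) :
    PiSupplemented (G ⧸ N) (Subgroup.map (QuotientGroup.mk' N) H) := by
  obtain ⟨T, hHT, I, hHTI, hIH, hI⟩ := h
  have hNT : N ≤ T := Subgroup.le_of_coprime_index_natCard
    (hcop.coprime_dvd_left (Subgroup.index_dvd_card_of_mul_eq_univ hHT))
  have hf := QuotientGroup.mk'_surjective N
  refine ⟨T.map (QuotientGroup.mk' N), ?_, I.map (QuotientGroup.mk' N), ?_,
    Subgroup.map_mono hIH, hI.map hf⟩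
  · rw [Subgroup.coe_map, Subgroup.coe_map, ← Set.image_mul, hHT, Set.image_univ,
      Set.range_eq_univ.mpr hf]
  · rw [← Subgroup.map_inf_of_ker_le _ _ (by rwa [QuotientGroup.ker_mk'])]
    exact Subgroup.map_mono hHTI
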